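/- Let h : {1, …, n} → {1, …, n} be a Hessenberg function and let 1 ≤ j < i ≤ n be such that the (i,j)-th box is a corner of h, i.e., h(j) = i and (if j > 1) h(j−1) ≤ i−1. Let W be the set of permutations w ∈ S_n satisfying: (a) w(j) − 1 = w(i), and (b) w^{−1}(w(r) − 1) ≤ h(r) for every r ≠ j with w(r) ≥ 2. Then every w_k^{(i,j)} with 1 ≤ k ≤ i−j belongs to W and has length i−j, every element of W has length at least i−j, and the elements of W of length exactly i−j are precisely the permutations w_k^{(i,j)} for 1 ≤ k ≤ i−j. -/

import Mathlib

open MvPolynomial Finset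

/-- The product of simple transpositions `s_a s_{a-1} ⋯ s_b` (descending indices),
where `s_r` interchanges `r` and `r+1`; the empty product (when `a < b`) is the identity. -/
def sdesc (a b : ℕ) : Equiv.Perm ℕ :=
  (((List.range' b (a + 1 - b)).reverse).map (fun r => Equiv.swap r (r + 1))).prod

/-- The product of simple transpositions `s_a s_{a+1} ⋯ s_b` (ascending indices);
the empty product (when `b < a`) is the identity. -/
def sasc (a b : ℕ) : Equiv.Perm ℕ :=
  ((List.range' a (b + 1 - a)).map (fun r => Equiv.swap r (r + 1))).prod

/-- The permutation `w_k^{(i,j)} = (s_{i-k} s_{i-k-1} ⋯ s_j)(s_{i-k+1} s_{i-k+2} ⋯ s_{i-1})`,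
regarded as a permutation of `ℕ` (supported on `{1, …, n}`). -/
def wkij (i j k : ℕ) : Equiv.Perm ℕ := sdesc (i - k) j * sasc (i - k + 1) (i - 1)

/-- The length (number of inversions among positions in `{1, …, n}`) of a permutation
of `ℕ` supported on `{1, …, n}`. -/
def permLen (n : ℕ) (w : Equiv.Perm ℕ) : ℕ :=
  ((Finset.Icc 1 n ×ˢ Finset.Icc 1 n).filter
    (fun p => p.1 < p.2 ∧ w p.2 < w p.1)).card

/-! Since `w i < w j`, every `r ∈ (j, i]` is inverted with `j` or with `i`, which already gives
`i - j` distinct inversions. If there are no others, the positions of `(j, i)` inverted with `j`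
form an initial segment `(j, m]`, so `w` has exactly the inversions of `w_k^{(i,j)}` with
`k = i - m`; and a permutation of `{1, …, n}` is determined by its inversions, since `w x - 1`
counts the `y` with `w y < w x`. Membership of `w_k^{(i,j)}` in `W` comes from
`w_k⁻¹ (w_k r - 1) ≤ r ≤ h r` for `r ≠ j`. -/

open Equiv

section Lehmer

variable {α : Type*} [LinearOrder α]

lemma Finset.injOn_card_filter_lt (s : Finset α) : Set.InjOn (fun a => #{z ∈ s | z < a}) s := by
  have hmono : ∀ a ∈ s, ∀ b, a < b → #{z ∈ s | z < a} < #{z ∈ s | z < b} := by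
    intro a ha b hab
    refine card_lt_card ((ssubset_iff_of_subset ?_).2 ⟨a, by simp [ha, hab], by simp⟩)
    exact monotone_filter_right s fun z _ (hz : z < a) => hz.trans hab
  intro a ha b hb hab
  by_contra hne
  rcases lt_or_gt_of_ne hne with hlt | hlt
  · exact (hmono a ha b hlt).ne hab
  · exact (hmono b hb a hlt).ne hab.symm

lemma Equiv.Perm.card_filter_apply_lt {σ : Perm α} {s : Finset α} (hσ : ∀ x ∉ s, σ x = x)
    (a : α) : #{y ∈ s | σ y < a} = #{z ∈ s | z < a} := by
  conv_rhs => rw [← Finset.map_perm (σ := σ) fun x hx => by_contra fun hxs => hx (hσ x hxs)]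
  rw [filter_map, card_map]
  rfl

lemma Equiv.Perm.eq_of_inversions_iff {σ τ : Perm α} {s : Finset α}
    (hσ : ∀ x ∉ s, σ x = x) (hτ : ∀ x ∉ s, τ x = x)
    (h : ∀ x ∈ s, ∀ y ∈ s, x < y → (σ y < σ x ↔ τ y < τ x)) : σ = τ := by
  ext x
  by_cases hx : x ∈ s
  swap
  · rw [hσ x hx, hτ x hx]
  have hmem : ∀ π : Perm α, (∀ x ∉ s, π x = x) → π x ∈ s := fun π hπ =>
    by_contra fun hn => hn (by rwa [π.injective (hπ _ hn)])
  have hbelow : ∀ y ∈ s, σ y < σ x ↔ τ y < τ x := by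
    intro y hy
    rcases lt_trichotomy x y with hxy | rfl | hyx
    · exact h x hx y hy hxy
    · simp
    · grind [h y hy x hx hyx, σ.injective.ne hyx.ne, τ.injective.ne hyx.ne]
  refine s.injOn_card_filter_lt (hmem σ hσ) (hmem τ hτ) ?_
  change #{z ∈ s | z < σ x} = #{z ∈ s | z < τ x}
  rw [← card_filter_apply_lt hσ, ← card_filter_apply_lt hτ, filter_congr hbelow]

end Lehmer

lemma sdesc_add_apply (b d x : ℕ) : sdesc (b + d) b x =
    if x = b then b + d + 1 else if b < x ∧ x ≤ b + d + 1 then x - 1 else x := by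
  induction d generalizing x with
  | zero =>
    simp only [sdesc, show b + 0 + 1 - b = 1 by omega, List.range'_one, List.reverse_singleton,
      List.map_singleton, List.prod_singleton, Equiv.swap_apply_def]
    split_ifs <;> omega
  | succ d ih =>
    have hstep : sdesc (b + (d + 1)) b = swap (b + d + 1) (b + d + 2) * sdesc (b + d) b := by
      simp only [sdesc, show b + (d + 1) + 1 - b = d + 1 + 1 by omega,
        show b + d + 1 - b = d + 1 by omega]
      rw [List.range'_concat, List.reverse_append, List.map_append, List.prod_append]
      simp [Nat.add_assoc]
    rw [hstep, Perm.mul_apply, ih, swap_apply_def]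
    split_ifs <;> omega

lemma sdesc_apply {a b : ℕ} (hba : b ≤ a) (x : ℕ) : sdesc a b x =
    if x = b then a + 1 else if b < x ∧ x ≤ a + 1 then x - 1 else x := by
  obtain ⟨d, rfl⟩ := Nat.exists_eq_add_of_le hba
  exact sdesc_add_apply b d x

lemma sasc_add_apply (a d x : ℕ) : sasc a (a + d) x =
    if a ≤ x ∧ x ≤ a + d then x + 1 else if x = a + d + 1 then a else x := by
  induction d generalizing a with
  | zero =>
    simp only [sasc, show a + 0 + 1 - a = 1 by omega, List.range'_one, List.map_singleton,
      List.prod_singleton, swap_apply_def]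
    split_ifs <;> omega
  | succ d ih =>
    have hstep : sasc a (a + (d + 1)) = swap a (a + 1) * sasc (a + 1) (a + 1 + d) := by
      simp only [sasc, show a + (d + 1) + 1 - a = d + 1 + 1 by omega,
        show a + 1 + d + 1 - (a + 1) = d + 1 by omega, List.range'_succ, List.map_cons,
        List.prod_cons]
    rw [hstep, Perm.mul_apply, ih, swap_apply_def]
    split_ifs <;> omega

lemma sasc_apply {a b : ℕ} (hab : a ≤ b + 1) (x : ℕ) : sasc a b x =
    if a ≤ x ∧ x ≤ b then x + 1 else if x = b + 1 then a else x := by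
  rcases hab.eq_or_lt with rfl | hlt
  · simp only [sasc, Nat.sub_self, List.range'_zero, List.map_nil, List.prod_nil,
      Perm.one_apply]
    split_ifs <;> omega
  · obtain ⟨d, rfl⟩ := Nat.exists_eq_add_of_le (Nat.le_of_lt_succ hlt)
    exact sasc_add_apply a d x

section Wkij

variable {i j k : ℕ}

lemma wkij_apply (hji : j < i) (hk1 : 1 ≤ k) (hk : k ≤ i - j) (x : ℕ) :
    wkij i j k x = if x = j then i - k + 1 else if j < x ∧ x ≤ i - k then x - 1
      else if i - k < x ∧ x < i then x + 1 else if x = i then i - k else x := by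
  rw [wkij, Perm.mul_apply, sasc_apply (by omega), sdesc_apply (by omega),
    Nat.sub_add_cancel (by omega : 1 ≤ i)]
  split_ifs <;> omega

lemma wkij_inv_apply (hji : j < i) (hk1 : 1 ≤ k) (hk : k ≤ i - j) (y : ℕ) :
    (wkij i j k)⁻¹ y = if y = i - k + 1 then j else if j ≤ y ∧ y < i - k then y + 1
      else if i - k + 1 < y ∧ y ≤ i then y - 1 else if y = i - k then i else y := by
  rw [Perm.inv_eq_iff_eq, wkij_apply hji hk1 hk]
  split_ifs <;> omega

lemma wkij_apply_of_notMem (hj : 1 ≤ j) (hji : j < i) (hk1 : 1 ≤ k) (hk : k ≤ i - j) {n : ℕ} (hin : i ≤ n)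
    (x : ℕ) (hx : x ∉ Icc 1 n) : wkij i j k x = x := by
  rw [mem_Icc] at hx
  rw [wkij_apply hji hk1 hk]
  split_ifs <;> omega

lemma wkij_apply_left (hji : j < i) (hk1 : 1 ≤ k) (hk : k ≤ i - j) : wkij i j k j = wkij i j k i + 1 := by
  rw [wkij_apply hji hk1 hk, wkij_apply hji hk1 hk]
  split_ifs <;> omega

lemma wkij_inv_apply_pred_le (hji : j < i) (hk1 : 1 ≤ k) (hk : k ≤ i - j) {r : ℕ}
    (hrj : r ≠ j) : (wkij i j k)⁻¹ (wkij i j k r - 1) ≤ r := by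
  rw [wkij_apply hji hk1 hk, wkij_inv_apply hji hk1 hk]
  split_ifs <;> omega

end Wkij

def inversions (n : ℕ) (w : Perm ℕ) : Finset (ℕ × ℕ) :=
  (Icc 1 n ×ˢ Icc 1 n).filter fun p => p.1 < p.2 ∧ w p.2 < w p.1

lemma permLen_eq_card_inversions (n : ℕ) (w : Perm ℕ) : permLen n w = #(inversions n w) := rfl

lemma mem_inversions {n : ℕ} {w : Perm ℕ} {p : ℕ × ℕ} :
    p ∈ inversions n w ↔ 1 ≤ p.1 ∧ p.2 ≤ n ∧ p.1 < p.2 ∧ w p.2 < w p.1 := by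
  simp only [inversions, mem_filter, mem_product, mem_Icc]
  omega

lemma eq_of_inversions_eq {n : ℕ} {w v : Perm ℕ} (hw : ∀ x ∉ Icc 1 n, w x = x)
    (hv : ∀ x ∉ Icc 1 n, v x = x) (h : inversions n w = inversions n v) : w = v := by
  refine Perm.eq_of_inversions_iff hw hv fun x hx y hy hxy => ?_
  rw [mem_Icc] at hx hy
  have hxy' := congrArg ((x, y) ∈ ·) h
  simp only [mem_inversions, eq_iff_iff] at hxy'
  simpa [hx.1, hy.2, hxy] using hxy'

def hookInversions (i j m : ℕ) : Finset (ℕ × ℕ) :=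
  (Ioc j i).image fun r => if r ≤ m ∨ r = i then (j, r) else (r, i)

lemma card_hookInversions (i j m : ℕ) : #(hookInversions i j m) = i - j := by
  rw [hookInversions, card_image_of_injOn, Nat.card_Ioc]
  intro r hr s hs hrs
  simp only [coe_Ioc, Set.mem_Ioc] at hr hs
  simp only at hrs
  split_ifs at hrs <;> simp only [Prod.mk.injEq] at hrs <;> omega

lemma inversions_wkij {n i j k : ℕ} (hj : 1 ≤ j) (hji : j < i) (hin : i ≤ n) (hk1 : 1 ≤ k)
    (hk : k ≤ i - j) : inversions n (wkij i j k) = hookInversions i j (i - k) := by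
  ext ⟨r, s⟩
  simp only [mem_inversions, hookInversions, mem_image, mem_Ioc, wkij_apply hji hk1 hk]
  constructor
  · intro hrs
    refine ⟨if r = j then s else r, ?_⟩
    split_ifs at hrs ⊢ <;> simp only [Prod.mk.injEq, and_true, true_and] <;> omega
  · rintro ⟨t, ht, hts⟩
    split_ifs at hts <;> simp only [Prod.mk.injEq] at hts <;> obtain ⟨rfl, rfl⟩ := hts <;>
      split_ifs <;> omega

section Corner

variable {n i j : ℕ} {w : Perm ℕ}

def cornerInversion (w : Perm ℕ) (i j r : ℕ) : ℕ × ℕ := if w r < w j then (j, r) else (r, i)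

lemma cornerInversion_mem_inversions (hj : 1 ≤ j) (hin : i ≤ n) (hw : w j = w i + 1) {r : ℕ}
    (hr : r ∈ Ioc j i) : cornerInversion w i j r ∈ inversions n w := by
  rw [mem_Ioc] at hr
  have hne : w r ≠ w j := w.injective.ne (by omega)
  unfold cornerInversion
  split_ifs with hlt
  · exact mem_inversions.2 ⟨hj, by omega, hr.1, hlt⟩
  · have hri : r ≠ i := by rintro rfl; omega
    exact mem_inversions.2 ⟨by omega, hin, by omega, show w i < w r by omega⟩

lemma injOn_cornerInversion : Set.InjOn (cornerInversion w i j) (Ioc j i) := by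
  intro r hr s hs hrs
  simp only [coe_Ioc, Set.mem_Ioc] at hr hs
  simp only [cornerInversion] at hrs
  split_ifs at hrs <;> simp only [Prod.mk.injEq] at hrs <;> omega

lemma image_cornerInversion_subset (hj : 1 ≤ j) (hin : i ≤ n) (hw : w j = w i + 1) :
    (Ioc j i).image (cornerInversion w i j) ⊆ inversions n w := by
  intro p hp
  obtain ⟨r, hr, rfl⟩ := mem_image.1 hp
  exact cornerInversion_mem_inversions hj hin hw hr

lemma sub_le_permLen (hj : 1 ≤ j) (hin : i ≤ n) (hw : w j = w i + 1) : i - j ≤ permLen n w := by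
  rw [permLen_eq_card_inversions, ← Nat.card_Ioc, ← card_image_of_injOn injOn_cornerInversion]
  exact card_le_card (image_cornerInversion_subset hj hin hw)

lemma inversions_eq_image_cornerInversion (hj : 1 ≤ j) (hin : i ≤ n) (hw : w j = w i + 1)
    (hlen : permLen n w = i - j) : inversions n w = (Ioc j i).image (cornerInversion w i j) := by
  refine (eq_of_subset_of_card_le (image_cornerInversion_subset hj hin hw) ?_).symm
  rw [← permLen_eq_card_inversions, hlen, card_image_of_injOn injOn_cornerInversion,
    Nat.card_Ioc]

/-- Two positions of `(j, i)` with only the later one inverted with `j` would form an inversion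
avoiding both `j` and `i`. -/
lemma exists_inversions_eq_hookInversions (hj : 1 ≤ j) (hji : j < i) (hin : i ≤ n)
    (hw : w j = w i + 1) (hlen : permLen n w = i - j) :
    ∃ m, j ≤ m ∧ m < i ∧ inversions n w = hookInversions i j m := by
  have hinv := inversions_eq_image_cornerInversion hj hin hw hlen
  set A := (Ioo j i).filter fun r => w r < w j
  have hdown : ∀ r ∈ Ioo j i, ∀ s ∈ A, r < s → r ∈ A := by
    intro r hr s hs hrs
    simp only [A, mem_filter, mem_Ioo] at hr hs ⊢
    refine ⟨hr, not_le.1 fun hle => ?_⟩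
    have hmem : (r, s) ∈ inversions n w :=
      mem_inversions.2 ⟨by omega, by omega, hrs, hs.2.trans_le hle⟩
    rw [hinv] at hmem
    obtain ⟨t, -, ht⟩ := mem_image.1 hmem
    unfold cornerInversion at ht
    split_ifs at ht <;> simp only [Prod.mk.injEq] at ht <;> omega
  set m := (insert j A).max' (insert_nonempty j A)
  have hjm : j ≤ m := le_max' _ j (mem_insert_self j A)
  have hA : ∀ r ∈ Ioo j i, r ∈ A ↔ r ≤ m := by
    refine fun r hr => ⟨fun hrA => le_max' _ r (mem_insert_of_mem hrA), fun hrm => ?_⟩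
    rcases mem_insert.1 (max'_mem _ (insert_nonempty j A)) with hmj | hmA
    · rw [mem_Ioo] at hr
      omega
    · exact (hrm.lt_or_eq).elim (hdown r hr m hmA) (· ▸ hmA)
  have hmi : m < i := by
    rcases mem_insert.1 (max'_mem _ (insert_nonempty j A)) with hmj | hmA
    · omega
    · exact (mem_Ioo.1 (mem_filter.1 hmA).1).2
  refine ⟨m, hjm, hmi, hinv.trans (image_congr fun r hr => ?_)⟩
  rw [coe_Ioc, Set.mem_Ioc] at hr
  have hlt : w r < w j ↔ r ≤ m ∨ r = i := by
    rcases hr.2.lt_or_eq with hri | rfl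
    · have := hA r (mem_Ioo.2 ⟨hr.1, hri⟩)
      simp only [A, mem_filter, mem_Ioo] at this
      omega
    · omega
  simp only [cornerInversion, hlt]

end Corner

theorem stmt15_general (n i j : ℕ) (hj : 1 ≤ j) (hji : j < i) (hin : i ≤ n)
    (h : ℕ → ℕ)
    (hge : ∀ r, 1 ≤ r → r ≤ n → r ≤ h r) :
    ∀ W : Set (Equiv.Perm ℕ),
      W = {w : Equiv.Perm ℕ |
        (∀ x, x ∉ Finset.Icc 1 n → w x = x) ∧
        w j = w i + 1 ∧
        (∀ r, 1 ≤ r → r ≤ n → r ≠ j → 2 ≤ w r → w⁻¹ (w r - 1) ≤ h r)} →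
      (∀ k, 1 ≤ k → k ≤ i - j → wkij i j k ∈ W ∧ permLen n (wkij i j k) = i - j) ∧
      (∀ w ∈ W, i - j ≤ permLen n w) ∧
      (∀ w ∈ W, permLen n w = i - j → ∃ k, 1 ≤ k ∧ k ≤ i - j ∧ w = wkij i j k) := by
  rintro W rfl
  refine ⟨fun k hk1 hk => ⟨⟨wkij_apply_of_notMem hj hji hk1 hk hin, wkij_apply_left hji hk1 hk,
      fun r hr1 hrn hrj _ => (wkij_inv_apply_pred_le hji hk1 hk hrj).trans (hge r hr1 hrn)⟩, ?_⟩,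
    fun w ⟨_, hw, _⟩ => sub_le_permLen hj hin hw, ?_⟩
  · rw [permLen_eq_card_inversions, inversions_wkij hj hji hin hk1 hk, card_hookInversions]
  rintro w ⟨hfix, hw, -⟩ hlen
  obtain ⟨m, hjm, hmi, hinv⟩ := exists_inversions_eq_hookInversions hj hji hin hw hlen
  have hk1 : 1 ≤ i - m := by omega
  have hk : i - m ≤ i - j := by omega
  refine ⟨i - m, hk1, hk, eq_of_inversions_eq hfix (wkij_apply_of_notMem hj hji hk1 hk hin) ?_⟩
  rw [hinv, inversions_wkij hj hji hin hk1 hk, Nat.sub_sub_self hmi.le]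

/-- Lemma 4.2 of the paper.  Let `h : {1, …, n} → {1, …, n}` be a
Hessenberg function (weakly increasing with `h(r) ≥ r`) whose `(i,j)`-th box is a
corner (`h(j) = i`, and `h(j-1) ≤ i-1` if `j > 1`), where `1 ≤ j < i ≤ n`.  Let `W`
be the set of `w ∈ S_n` (permutations of `ℕ` fixing everything outside `{1, …, n}`)
with (a) `w(j) - 1 = w(i)` and (b) `w⁻¹(w(r) - 1) ≤ h(r)` for every position
`r ≠ j` with `w(r) ≥ 2`.  Then each `w_k^{(i,j)}` (`1 ≤ k ≤ i-j`) lies in `W` and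
has length `i - j`, every element of `W` has length at least `i - j`, and the
elements of `W` of length exactly `i - j` are precisely the `w_k^{(i,j)}`. -/
theorem stmt15 (n i j : ℕ) (hj : 1 ≤ j) (hji : j < i) (hin : i ≤ n)
    (h : ℕ → ℕ)
    (hmono : ∀ r s, 1 ≤ r → r ≤ s → s ≤ n → h r ≤ h s)
    (hge : ∀ r, 1 ≤ r → r ≤ n → r ≤ h r)
    (hle : ∀ r, 1 ≤ r → r ≤ n → h r ≤ n)
    (hcorner1 : h j = i)
    (hcorner2 : 1 < j → h (j - 1) ≤ i - 1) :
    ∀ W : Set (Equiv.Perm ℕ),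
      W = {w : Equiv.Perm ℕ |
        (∀ x, x ∉ Finset.Icc 1 n → w x = x) ∧
        w j = w i + 1 ∧
        (∀ r, 1 ≤ r → r ≤ n → r ≠ j → 2 ≤ w r → w⁻¹ (w r - 1) ≤ h r)} →
      (∀ k, 1 ≤ k → k ≤ i - j → wkij i j k ∈ W ∧ permLen n (wkij i j k) = i - j) ∧
      (∀ w ∈ W, i - j ≤ permLen n w) ∧
      (∀ w ∈ W, permLen n w = i - j → ∃ k, 1 ≤ k ∧ k ≤ i - j ∧ w = wkij i j k) :=
  stmt15_general n i j hj hji hin h hge
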